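/- arXiv:2308.09785 — 2 statements merged into one kernel-verified Lean document; each statement's English description precedes it below -/
import Mathlib

section
/- Under the hypotheses of the previous statement, the observable measured by the sequential product instrument satisfies (I^M ∘ I^{M'})^∧_{(x,y)} = Σ_{x',y'} tr(γ_{x'}P_x) tr(γ'_{y'}P'_y) α_{x'}^*((α')^∧_{y'}), where (α')^∧_{y'} = (α'_{y'})^*(I). -/
open scoped Kronecker ComplexOrder
open Matrix

noncomputable section

namespace MM

/-- Complete positivity of a linear map between matrix algebras. -/
def IsCP {H R : Type*} [Fintype H] [Fintype R]
    (Φ : Matrix H H ℂ →ₗ[ℂ] Matrix R R ℂ) : Prop :=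
  ∀ (k : ℕ) (M : Matrix (H × Fin k) (H × Fin k) ℂ), M.PosSemidef →
    (Matrix.of fun p q : R × Fin k =>
      (Φ (Matrix.of fun i j => M (i, p.2) (j, q.2))) p.1 q.1).PosSemidef

/-- An operation: completely positive and trace non-increasing (on positive operators). -/
def IsOperation {H R : Type*} [Fintype H] [Fintype R]
    (Φ : Matrix H H ℂ →ₗ[ℂ] Matrix R R ℂ) : Prop :=
  IsCP Φ ∧ ∀ M : Matrix H H ℂ, M.PosSemidef → ((Φ M).trace).re ≤ (M.trace).re

/-- A channel: completely positive and trace preserving. -/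
def IsChannel {H R : Type*} [Fintype H] [Fintype R]
    (Φ : Matrix H H ℂ →ₗ[ℂ] Matrix R R ℂ) : Prop :=
  IsCP Φ ∧ ∀ M : Matrix H H ℂ, (Φ M).trace = M.trace

/-- A state: positive semidefinite with unit trace. -/
def IsState {H : Type*} [Fintype H] (ρ : Matrix H H ℂ) : Prop :=
  ρ.PosSemidef ∧ ρ.trace = 1

/-- An effect: 0 ≤ a ≤ I. -/
def IsEffect {H : Type*} [Fintype H] [DecidableEq H] (a : Matrix H H ℂ) : Prop :=
  a.PosSemidef ∧ (1 - a).PosSemidef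

/-- A (finite) observable: effects summing to the identity. -/
def IsObservable {X H : Type*} [Fintype X] [Fintype H] [DecidableEq H]
    (P : X → Matrix H H ℂ) : Prop :=
  (∀ x, IsEffect (P x)) ∧ ∑ x, P x = 1

/-- An instrument: operations summing to a channel. -/
def IsInstrument {Y H : Type*} [Fintype Y] [Fintype H]
    (α : Y → Matrix H H ℂ →ₗ[ℂ] Matrix H H ℂ) : Prop :=
  (∀ y, IsOperation (α y)) ∧ IsChannel (∑ y, α y)

/-- Partial trace over the second factor. -/
def trK {H K : Type*} [Fintype K] (M : Matrix (H × K) (H × K) ℂ) : Matrix H H ℂ :=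
  Matrix.of fun i j => ∑ a, M (i, a) (j, a)

/-- The instrument measured by a measurement model: ρ ↦ tr_K[ν(ρ)(I ⊗ P_x)]. -/
def measuredI {H K : Type*} [Fintype H] [Fintype K] [DecidableEq H] [DecidableEq K]
    (ν : Matrix H H ℂ →ₗ[ℂ] Matrix (H × K) (H × K) ℂ) (Px : Matrix K K ℂ)
    (ρ : Matrix H H ℂ) : Matrix H H ℂ :=
  trK (ν ρ * ((1 : Matrix H H ℂ) ⊗ₖ Px))

lemma trK_sum {H K ι : Type*} [Fintype K] (s : Finset ι)
    (f : ι → Matrix (H × K) (H × K) ℂ) :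
    trK (∑ i ∈ s, f i) = ∑ i ∈ s, trK (f i) := by
  ext i j
  simp only [trK, Matrix.of_apply, Matrix.sum_apply]
  rw [Finset.sum_comm]

lemma trK_kron {H K : Type*} [Fintype K] (A : Matrix H H ℂ) (M : Matrix K K ℂ) :
    trK (A ⊗ₖ M) = M.trace • A := by
  ext i j
  simp [trK, Matrix.trace, Matrix.diag, Finset.mul_sum, mul_comm]

lemma eq_of_forall_trace {H : Type*} [Fintype H] [DecidableEq H] (A B : Matrix H H ℂ)
    (h : ∀ ρ, (ρ * A).trace = (ρ * B).trace) : A = B := by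
  ext i j
  have := h (Matrix.single j i 1)
  simpa [Matrix.trace, Matrix.diag, Matrix.mul_apply, Matrix.single, ite_and] using this

lemma measured_sep {H K X' : Type*} [Fintype H] [Fintype K] [Fintype X']
    [DecidableEq H] [DecidableEq K]
    (ν : Matrix H H ℂ →ₗ[ℂ] Matrix (H × K) (H × K) ℂ)
    (α : X' → Matrix H H ℂ →ₗ[ℂ] Matrix H H ℂ)
    (γ : X' → Matrix K K ℂ)
    (hsep : ∀ ρ, ν ρ = ∑ x', (α x' ρ) ⊗ₖ γ x')
    (Px : Matrix K K ℂ) (ρ : Matrix H H ℂ) :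
    measuredI ν Px ρ = ∑ x', ((γ x' * Px).trace) • α x' ρ := by
  unfold measuredI
  rw [hsep, Finset.sum_mul, trK_sum]
  refine Finset.sum_congr rfl fun x' _ => ?_
  rw [← Matrix.mul_kronecker_mul, Matrix.mul_one, trK_kron]

theorem stmt4 {H K K' X Y X' Y' : Type*} [Fintype H] [Fintype K] [Fintype K']
    [Fintype X] [Fintype Y] [Fintype X'] [Fintype Y']
    [DecidableEq H] [DecidableEq K] [DecidableEq K']
    (ν : Matrix H H ℂ →ₗ[ℂ] Matrix (H × K) (H × K) ℂ) (hν : IsChannel ν)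
    (ν' : Matrix H H ℂ →ₗ[ℂ] Matrix (H × K') (H × K') ℂ) (hν' : IsChannel ν')
    (α : X' → Matrix H H ℂ →ₗ[ℂ] Matrix H H ℂ) (hα : IsInstrument α)
    (α' : Y' → Matrix H H ℂ →ₗ[ℂ] Matrix H H ℂ) (hα' : IsInstrument α')
    (γ : X' → Matrix K K ℂ) (hγ : ∀ x', IsState (γ x'))
    (γ' : Y' → Matrix K' K' ℂ) (hγ' : ∀ y', IsState (γ' y'))
    (hsep : ∀ ρ, ν ρ = ∑ x', (α x' ρ) ⊗ₖ γ x')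
    (hsep' : ∀ ρ, ν' ρ = ∑ y', (α' y' ρ) ⊗ₖ γ' y')
    (P : X → Matrix K K ℂ) (hP : IsObservable P)
    (P' : Y → Matrix K' K' ℂ) (hP' : IsObservable P')
    (αd : X' → Matrix H H ℂ →ₗ[ℂ] Matrix H H ℂ)
    (hαd : ∀ x' ρ B, (ρ * αd x' B).trace = (α x' ρ * B).trace)
    (αd' : Y' → Matrix H H ℂ →ₗ[ℂ] Matrix H H ℂ)
    (hαd' : ∀ y' ρ B, (ρ * αd' y' B).trace = (α' y' ρ * B).trace)
    (Chat : X × Y → Matrix H H ℂ)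
    (hChat : ∀ x y ρ, (ρ * Chat (x, y)).trace =
      (measuredI ν' (P' y) (measuredI ν (P x) ρ)).trace) :
    ∀ x y, Chat (x, y) = ∑ x', ∑ y',
      (((γ x' * P x).trace) * ((γ' y' * P' y).trace)) • αd x' (αd' y' 1) := by
  intro x y
  refine eq_of_forall_trace _ _ fun ρ => ?_
  rw [hChat, measured_sep ν α γ hsep, measured_sep ν' α' γ' hsep']
  simp only [map_sum, _root_.map_smul, Matrix.mul_sum, Finset.mul_sum, Matrix.mul_smul, Matrix.trace_sum,
    Matrix.trace_smul, smul_eq_mul, hαd, hαd', mul_one]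
  rw [Finset.sum_comm]
  refine Finset.sum_congr rfl fun y' _ => ?_
  refine Finset.sum_congr rfl fun x' _ => ?_
  ring

end MM
end
end

section
/- Let ν(ρ) = Σ_y α_y(ρ) ⊗ γ_y, ν'(ρ) = Σ_{y'} α'_{y'}(ρ) ⊗ γ'_{y'} be separable channels with Holevo instruments α_y(ρ) = tr(ρ A_y) β_y and α'_{y'}(ρ) = tr(ρ B_{y'}) β'_{y'}, and let M = (K, ν, P), M' = (K', ν', P'). Then the observable measured by the sequential product M∘M' is (I^{M∘M'})^∧_{(x,y)} = Σ_{x',y'} tr(γ_{x'} P_x) tr(γ'_{y'} P'_y) tr(β_{x'} B_{y'}) A_{x'}. -/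
open scoped Kronecker ComplexOrder
open Matrix

noncomputable section

namespace MM

lemma trace_trK {H K : Type*} [Fintype H] [Fintype K]
    (M : Matrix (H × K) (H × K) ℂ) : (trK M).trace = M.trace := by
  simp [trK, Matrix.trace, Matrix.diag, Fintype.sum_prod_type]

lemma eq_of_trace_mul {H : Type*} [Fintype H] [DecidableEq H]
    (C D : Matrix H H ℂ) (h : ∀ ρ : Matrix H H ℂ, (ρ * C).trace = (ρ * D).trace) :
    C = D := by
  ext i j
  have := h (Matrix.single j i 1)
  simpa [Matrix.trace, Matrix.diag, Matrix.mul_apply, Matrix.single,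
    ite_and, Finset.sum_ite_eq, Finset.sum_ite_eq'] using this

theorem stmt18 {H K K' X Y X' Y' : Type*} [Fintype H] [Fintype K] [Fintype K']
    [Fintype X] [Fintype Y] [Fintype X'] [Fintype Y']
    [DecidableEq H] [DecidableEq K] [DecidableEq K']
    (A : X' → Matrix H H ℂ) (hA : IsObservable A)
    (β : X' → Matrix H H ℂ) (hβ : ∀ x', IsState (β x'))
    (B : Y' → Matrix H H ℂ) (hB : IsObservable B)
    (β' : Y' → Matrix H H ℂ) (hβ' : ∀ y', IsState (β' y'))
    (α : X' → Matrix H H ℂ →ₗ[ℂ] Matrix H H ℂ)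
    (hα : ∀ x' ρ, α x' ρ = ((ρ * A x').trace) • β x')
    (α' : Y' → Matrix H H ℂ →ₗ[ℂ] Matrix H H ℂ)
    (hα' : ∀ y' ρ, α' y' ρ = ((ρ * B y').trace) • β' y')
    (γ : X' → Matrix K K ℂ) (hγ : ∀ x', IsState (γ x'))
    (γ' : Y' → Matrix K' K' ℂ) (hγ' : ∀ y', IsState (γ' y'))
    (ν : Matrix H H ℂ →ₗ[ℂ] Matrix (H × K) (H × K) ℂ) (hν : IsChannel ν)
    (ν' : Matrix H H ℂ →ₗ[ℂ] Matrix (H × K') (H × K') ℂ) (hν' : IsChannel ν')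
    (hsep : ∀ ρ, ν ρ = ∑ x', (α x' ρ) ⊗ₖ γ x')
    (hsep' : ∀ ρ, ν' ρ = ∑ y', (α' y' ρ) ⊗ₖ γ' y')
    (P : X → Matrix K K ℂ) (hP : IsObservable P)
    (P' : Y → Matrix K' K' ℂ) (hP' : IsObservable P')
    (μ : Matrix H H ℂ →ₗ[ℂ] Matrix (H × (K × K')) (H × (K × K')) ℂ)
    (hμdef : ∀ ρ, μ ρ = ∑ x', ∑ y', ((α' y') ((α x') ρ)) ⊗ₖ (γ x' ⊗ₖ γ' y'))
    (Chat : X × Y → Matrix H H ℂ)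
    (hChat : ∀ x y ρ, (ρ * Chat (x, y)).trace =
      (trK (μ ρ * ((1 : Matrix H H ℂ) ⊗ₖ (P x ⊗ₖ P' y)))).trace) :
    ∀ x y, Chat (x, y) = ∑ x', ∑ y',
      ((γ x' * P x).trace * (γ' y' * P' y).trace * (β x' * B y').trace) • A x' := by
  intro x y
  apply eq_of_trace_mul
  intro ρ
  rw [hChat x y ρ, trace_trK, hμdef]
  have lhs : (((∑ x', ∑ y', ((α' y') ((α x') ρ)) ⊗ₖ (γ x' ⊗ₖ γ' y')) *
      ((1 : Matrix H H ℂ) ⊗ₖ (P x ⊗ₖ P' y)))).trace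
      = ∑ x', ∑ y', (ρ * A x').trace * (β x' * B y').trace *
        ((γ x' * P x).trace * (γ' y' * P' y).trace) := by
    rw [Finset.sum_mul, Matrix.trace_sum]
    refine Finset.sum_congr rfl fun x' _ => ?_
    rw [Finset.sum_mul, Matrix.trace_sum]
    refine Finset.sum_congr rfl fun y' _ => ?_
    rw [← Matrix.mul_kronecker_mul, Matrix.mul_one, ← Matrix.mul_kronecker_mul,
      Matrix.trace_kronecker, Matrix.trace_kronecker]
    have : ((α' y') ((α x') ρ)).trace = (ρ * A x').trace * (β x' * B y').trace := by
      rw [hα' y', hα x', Matrix.trace_smul, Matrix.smul_mul, Matrix.trace_smul,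
        (hβ' y').2, smul_eq_mul, smul_eq_mul, mul_one]
    rw [this]
  rw [lhs, Finset.mul_sum, Matrix.trace_sum]
  refine Finset.sum_congr rfl fun x' _ => ?_
  rw [Finset.mul_sum, Matrix.trace_sum]
  refine Finset.sum_congr rfl fun y' _ => ?_
  rw [Matrix.mul_smul, Matrix.trace_smul, smul_eq_mul]
  ring

end MM
end
end
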